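/- Let N ≥ 1, let F : ℤ^N → ℤ^N be a polynomial endomorphism over ℤ given by coordinate polynomials f₁, …, f_N ∈ ℤ[x₁,…,x_N], let p be a prime, and suppose every coordinate of F(0) is divisible by p^r for an integer r ≥ 1. Let D ∈ Mat_N(ℤ) be the Jacobian matrix D = (∂f_i/∂x_j (0))_{1≤i,j≤N}. Then for every k ≥ 1, F^(k+1)(0) ≡ (I + D + D² + ⋯ + D^k) · F(0) (mod p^(2r)), where points of ℤ^N are regarded as column vectors and the congruence holds coordinatewise. -/

import Mathlib

/-!
Write `F x = (eval x (f i))ᵢ` and `J` for its Jacobian at `0`. Since `p^r ∣ F(0)`, the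
congruence `x ≡ y (mod p^r)` gives `F x ≡ F y (mod p^r)`, so every iterate `F^[m] 0` is
`≡ 0 (mod p^r)`. For such `x`, first-order Taylor expansion at `0` is exact modulo
`p^(2r)`: the remainder consists of products of at least two coordinates of `x`. Hence
`F^[k+2] 0 ≡ F 0 + J F^[k+1] 0`, and induction on `k` gives the geometric sum.
-/

open Finset Matrix

theorem Matrix.dvd_mulVec_apply {R n : Type*} [CommRing R] [Fintype n] {a : R}
    (M : Matrix n n R) {v : n → R} (hv : ∀ j, a ∣ v j) (i : n) : a ∣ (M *ᵥ v) i :=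
  Finset.dvd_sum fun j _ => (hv j).mul_left _

namespace MvPolynomial

variable {R σ : Type*} [CommRing R]

noncomputable def polynomialMap (f : σ → MvPolynomial σ R) (x : σ → R) : σ → R :=
  fun i => eval x (f i)

theorem dvd_eval_sub_eval {a : R} {x y : σ → R} (h : ∀ j, a ∣ x j - y j)
    (g : MvPolynomial σ R) : a ∣ eval x g - eval y g := by
  induction g using MvPolynomial.induction_on with
  | C c => simp
  | add g₁ g₂ h₁ h₂ => simpa only [map_add, add_sub_add_comm] using dvd_add h₁ h₂
  | mul_X g j hg =>
    have hsplit : eval x (g * X j) - eval y (g * X j)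
        = (eval x g - eval y g) * x j + eval y g * (x j - y j) := by
      simp only [eval_mul, eval_X]; ring
    rw [hsplit]
    exact dvd_add (hg.mul_right _) ((h j).mul_left _)

theorem dvd_iterate_polynomialMap_zero {f : σ → MvPolynomial σ R} {a : R}
    (h₀ : ∀ i, a ∣ polynomialMap f 0 i) (m : ℕ) (i : σ) : a ∣ (polynomialMap f)^[m] 0 i := by
  induction m generalizing i with
  | zero => simp
  | succ m ih =>
    rw [Function.iterate_succ_apply', ← sub_add_cancel (polynomialMap f _ i)]
    exact dvd_add (dvd_eval_sub_eval (by simpa using ih) (f i)) (h₀ i)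

variable [Fintype σ]

theorem sq_dvd_eval_sub_eval_sub_sum_pderiv {a : R} {x y : σ → R} (h : ∀ j, a ∣ x j - y j)
    (g : MvPolynomial σ R) :
    a ^ 2 ∣ eval x g - eval y g - ∑ j, (x j - y j) * eval y (pderiv j g) := by
  classical
  induction g using MvPolynomial.induction_on with
  | C c => simp
  | add g₁ g₂ h₁ h₂ =>
    convert dvd_add h₁ h₂ using 1
    simp only [map_add, mul_add, sum_add_distrib]
    ring
  | mul_X g j hg =>
    have hsum : ∑ i, (x i - y i) * eval y (pderiv i (g * X j))
        = (∑ i, (x i - y i) * eval y (pderiv i g)) * y j + (x j - y j) * eval y g := by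
      simp only [Derivation.leibniz, pderiv_X, Pi.single_apply, apply_ite, smul_eq_mul, mul_one,
        mul_zero, map_add, map_zero, map_mul, eval_X, mul_add, sum_add_distrib, sum_ite_eq,
        mem_univ, ↓reduceIte, sum_mul]
      rw [add_comm]
      congr 1
      exact sum_congr rfl fun _ _ => by ring
    have hsplit : eval x (g * X j) - eval y (g * X j)
          - ∑ i, (x i - y i) * eval y (pderiv i (g * X j))
        = (eval x g - eval y g) * (x j - y j)
          + (eval x g - eval y g - ∑ i, (x i - y i) * eval y (pderiv i g)) * y j := by
      rw [hsum]; simp only [eval_mul, eval_X]; ring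
    rw [hsplit]
    exact dvd_add (sq a ▸ mul_dvd_mul (dvd_eval_sub_eval h g) (h j)) (hg.mul_right _)

noncomputable def jacobian (f : σ → MvPolynomial σ R) (y : σ → R) : Matrix σ σ R :=
  Matrix.of fun i j => eval y (pderiv j (f i))

theorem sq_dvd_polynomialMap_sub_sub_jacobian_mulVec {f : σ → MvPolynomial σ R}
    {a : R} {x y : σ → R} (h : ∀ j, a ∣ x j - y j) (i : σ) :
    a ^ 2 ∣ polynomialMap f x i - polynomialMap f y i - (jacobian f y *ᵥ (x - y)) i := by
  have hJ : (jacobian f y *ᵥ (x - y)) i = ∑ j, (x j - y j) * eval y (pderiv j (f i)) :=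
    sum_congr rfl fun j _ => mul_comm _ _
  rw [hJ]
  exact sq_dvd_eval_sub_eval_sub_sum_pderiv h (f i)

theorem sq_dvd_iterate_polynomialMap_zero_sub_geom_sum_mulVec [DecidableEq σ]
    {f : σ → MvPolynomial σ R} {a : R} (h₀ : ∀ i, a ∣ polynomialMap f 0 i) (k : ℕ) (i : σ) :
    a ^ 2 ∣ (polynomialMap f)^[k + 1] 0 i
      - ((∑ l ∈ range (k + 1), jacobian f 0 ^ l) *ᵥ polynomialMap f 0) i := by
  induction k generalizing i with
  | zero => simp
  | succ k ih =>
    set P := polynomialMap f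
    set J := jacobian f 0
    set y := P^[k + 1] 0
    set z := (∑ l ∈ range (k + 1), J ^ l) *ᵥ P 0
    have taylor : a ^ 2 ∣ P y i - P 0 i - (J *ᵥ (y - 0)) i :=
      sq_dvd_polynomialMap_sub_sub_jacobian_mulVec
        (fun j => by simpa only [Pi.zero_apply, sub_zero] using
          dvd_iterate_polynomialMap_zero h₀ (k + 1) j) i
    have close : a ^ 2 ∣ (J *ᵥ (y - z)) i := J.dvd_mulVec_apply ih i
    have split : P^[k + 2] 0 i - ((∑ l ∈ range (k + 2), J ^ l) *ᵥ P 0) i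
        = (P y i - P 0 i - (J *ᵥ (y - 0)) i) + (J *ᵥ (y - z)) i := by
      rw [Function.iterate_succ_apply', geom_sum_succ, add_mulVec, ← mulVec_mulVec, one_mulVec,
        sub_zero, mulVec_sub]
      simp only [Pi.add_apply, Pi.sub_apply]
      ring
    rw [split]
    exact dvd_add taylor close

end MvPolynomial

theorem stmt9_general (N : ℕ) (p : ℕ) (r : ℕ)
    (f : Fin N → MvPolynomial (Fin N) ℤ)
    (F : (Fin N → ℤ) → (Fin N → ℤ))
    (hF : ∀ x, F x = fun i => MvPolynomial.eval x (f i))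
    (hdiv : ∀ i, (p : ℤ) ^ r ∣ F 0 i)
    (D : Matrix (Fin N) (Fin N) ℤ)
    (hD : ∀ i j, D i j = MvPolynomial.eval 0 (MvPolynomial.pderiv j (f i))) :
    ∀ k, 1 ≤ k → ∀ i,
      (p : ℤ) ^ (2 * r) ∣
        F^[k + 1] 0 i - (∑ l ∈ Finset.range (k + 1), D ^ l).mulVec (F 0) i := by
  obtain rfl : F = MvPolynomial.polynomialMap f := funext hF
  obtain rfl : D = MvPolynomial.jacobian f 0 := Matrix.ext hD
  intro k _ i
  rw [mul_comm, pow_mul]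
  exact MvPolynomial.sq_dvd_iterate_polynomialMap_zero_sub_geom_sum_mulVec hdiv k i

/-- Suppose every coordinate of `F(0)` is divisible by `p^r` (`r ≥ 1`),
and let `D = (∂f_i/∂x_j (0))` be the Jacobian of `F` at the origin. Then for every `k ≥ 1`,
`F^(k+1)(0) ≡ (I + D + D² + ⋯ + D^k) · F(0) (mod p^(2r))` coordinatewise. -/
theorem stmt9 (N : ℕ) (hN : 1 ≤ N) (p : ℕ) (hp : p.Prime) (r : ℕ) (hr : 1 ≤ r)
    (f : Fin N → MvPolynomial (Fin N) ℤ)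
    (F : (Fin N → ℤ) → (Fin N → ℤ))
    (hF : ∀ x, F x = fun i => MvPolynomial.eval x (f i))
    (hdiv : ∀ i, (p : ℤ) ^ r ∣ F 0 i)
    (D : Matrix (Fin N) (Fin N) ℤ)
    (hD : ∀ i j, D i j = MvPolynomial.eval 0 (MvPolynomial.pderiv j (f i))) :
    ∀ k, 1 ≤ k → ∀ i,
      (p : ℤ) ^ (2 * r) ∣
        F^[k + 1] 0 i - (∑ l ∈ Finset.range (k + 1), D ^ l).mulVec (F 0) i :=
  stmt9_general N p r f F hF hdiv D hD
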